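/- Let $c=(c_1,\ldots,c_d)$ be a unit vector with nonnegative entries and let $\{u_k^{(q)}\}_{k=1}^d$ be orthonormal bases of $\mathbb{R}^d$ for $q=2,\ldots,p$ with $p\ge 3$. Then the spectral norm of the $(p-1)$th order tensor $\sum_{k=1}^d c_k u_k^{(2)}\otimes\cdots\otimes u_k^{(p)}$ equals $\max_{1\le k\le d} c_k$. -/

import Mathlib

/-!
Expanding `x^{(q)}` in the basis `u^{(q)}` with coefficients `a_k^{(q)} = ⟨u_k^{(q)}, x^{(q)}⟩`,
the pairing of the tensor with `x^{(2)} ⊗ ⋯ ⊗ x^{(p)}` becomes `∑_k c_k ∏_q a_k^{(q)}`, and by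
Parseval each `a^{(q)}` is again a unit vector. All factors are at most `1` in absolute value, so
keeping only two of them and applying `2|st| ≤ s² + t²` termwise bounds the pairing by
`max_k c_k · ∑_k |a_k^{(2)}| |a_k^{(3)}| ≤ max_k c_k`. The bound is attained at
`x^{(q)} = u_{k₀}^{(q)}` for a maximising index `k₀`.
-/

open Finset Real

/-- Inner product of a tensor of order `m` with a rank-one tensor. -/
noncomputable def tInner {m d : ℕ} (T : (Fin m → Fin d) → ℝ) (x : Fin m → Fin d → ℝ) : ℝ :=
  ∑ i : Fin m → Fin d, T i * ∏ q, x q (i q)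

/-- Membership in the unit sphere `S^{d-1}`. -/
def UnitVec {d : ℕ} (x : Fin d → ℝ) : Prop := ∑ j, x j ^ 2 = 1

/-- Tensor spectral norm: supremum of pairings with unit rank-one tensors. -/
noncomputable def specNorm {m d : ℕ} (T : (Fin m → Fin d) → ℝ) : ℝ :=
  sSup { v | ∃ x : Fin m → Fin d → ℝ, (∀ q, UnitVec (x q)) ∧ v = tInner T x }

open Matrix

noncomputable def sumRankOne {m d : ℕ} (c : Fin d → ℝ) (u : Fin m → Fin d → Fin d → ℝ) :
    (Fin m → Fin d) → ℝ :=
  fun i => ∑ k, c k * ∏ q, u q k (i q)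

lemma tInner_sumRankOne {m d : ℕ} (c : Fin d → ℝ) (u : Fin m → Fin d → Fin d → ℝ)
    (x : Fin m → Fin d → ℝ) :
    tInner (sumRankOne c u) x = ∑ k, c k * ∏ q, (u q *ᵥ x q) k := by
  calc tInner (sumRankOne c u) x
      = ∑ k, c k * ∑ i : Fin m → Fin d, ∏ q, u q k (i q) * x q (i q) := by
        simp only [tInner, sumRankOne, sum_mul, mul_sum, mul_assoc, ← prod_mul_distrib]
        exact sum_comm
    _ = ∑ k, c k * ∏ q, (u q *ᵥ x q) k := by
        simp only [mulVec, dotProduct, Fintype.prod_sum]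

lemma mul_transpose_eq_one_of_orthonormal {ι : Type*} [Fintype ι] [DecidableEq ι]
    {u : Matrix ι ι ℝ} (hu : ∀ k l, ∑ j, u k j * u l j = if k = l then 1 else 0) :
    u * uᵀ = 1 := by
  ext k l
  simpa [mul_apply, one_apply] using hu k l

lemma sum_sq_mulVec_of_orthonormal {ι : Type*} [Fintype ι] [DecidableEq ι]
    {u : Matrix ι ι ℝ} (hu : ∀ k l, ∑ j, u k j * u l j = if k = l then 1 else 0) (x : ι → ℝ) :
    ∑ k, (u *ᵥ x) k ^ 2 = ∑ j, x j ^ 2 := by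
  have hu' : uᵀ * u = 1 := mul_eq_one_comm.mp (mul_transpose_eq_one_of_orthonormal hu)
  calc ∑ k, (u *ᵥ x) k ^ 2 = (u *ᵥ x) ⬝ᵥ (u *ᵥ x) := by simp only [dotProduct, sq]
    _ = x ⬝ᵥ x := by
        rw [dotProduct_mulVec, ← mulVec_transpose, mulVec_mulVec, hu', one_mulVec]
    _ = ∑ j, x j ^ 2 := by simp only [dotProduct, sq]

lemma abs_le_one_of_sum_sq_eq_one {ι : Type*} [Fintype ι] {a : ι → ℝ}
    (ha : ∑ k, a k ^ 2 = 1) (k : ι) : |a k| ≤ 1 := by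
  rw [← sq_le_one_iff_abs_le_one, ← ha]
  exact single_le_sum (fun l _ => sq_nonneg (a l)) (mem_univ k)

lemma sum_abs_mul_abs_le_one {ι : Type*} [Fintype ι] {a b : ι → ℝ}
    (ha : ∑ k, a k ^ 2 = 1) (hb : ∑ k, b k ^ 2 = 1) : ∑ k, |a k| * |b k| ≤ 1 := by
  have h := sum_le_sum fun k (_ : k ∈ univ) => two_mul_le_add_sq |a k| |b k|
  simp only [sq_abs, sum_add_distrib, ha, hb, mul_assoc, ← mul_sum] at h
  linarith

lemma prod_le_abs_mul_abs {α : Type*} [Fintype α] [DecidableEq α] {x : α → ℝ}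
    (hx : ∀ q, |x q| ≤ 1) {q₀ q₁ : α} (h : q₀ ≠ q₁) : ∏ q, x q ≤ |x q₀| * |x q₁| := by
  calc ∏ q, x q ≤ ∏ q, |x q| := (le_abs_self _).trans (abs_prod _ _).le
    _ = (|x q₀| * |x q₁|) * ∏ q ∈ {q₀, q₁}ᶜ, |x q| := by
        rw [← prod_mul_prod_compl {q₀, q₁}, prod_pair h]
    _ ≤ |x q₀| * |x q₁| :=
        mul_le_of_le_one_right (by positivity)
          (prod_le_one (fun q _ => abs_nonneg _) fun q _ => hx q)

lemma sum_mul_prod_le {ι : Type*} [Fintype ι] {m : ℕ} (hm : 2 ≤ m) {c : ι → ℝ}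
    (hc : ∀ k, 0 ≤ c k) {M : ℝ} (hcM : ∀ k, c k ≤ M) {a : Fin m → ι → ℝ}
    (ha : ∀ q, ∑ k, a q k ^ 2 = 1) : ∑ k, c k * ∏ q, a q k ≤ M := by
  let q₀ : Fin m := ⟨0, by omega⟩
  let q₁ : Fin m := ⟨1, by omega⟩
  obtain ⟨k, -, -⟩ := exists_ne_zero_of_sum_ne_zero ((ha q₀).trans_ne one_ne_zero)
  have hM : 0 ≤ M := (hc k).trans (hcM k)
  calc ∑ k, c k * ∏ q, a q k ≤ ∑ k, M * (|a q₀ k| * |a q₁ k|) := by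
        refine sum_le_sum fun k _ => ?_
        have hprod := prod_le_abs_mul_abs (x := fun q => a q k)
          (fun q => abs_le_one_of_sum_sq_eq_one (ha q) k) (show q₀ ≠ q₁ by simp [q₀, q₁])
        exact (mul_le_mul_of_nonneg_left hprod (hc k)).trans
          (mul_le_mul_of_nonneg_right (hcM k) (by positivity))
    _ = M * ∑ k, |a q₀ k| * |a q₁ k| := mul_sum _ _ _ |>.symm
    _ ≤ M := mul_le_of_le_one_right hM (sum_abs_mul_abs_le_one (ha q₀) (ha q₁))

lemma tInner_sumRankOne_row {m d : ℕ} (hm : 0 < m) (c : Fin d → ℝ)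
    {u : Fin m → Fin d → Fin d → ℝ}
    (hu : ∀ q k l, ∑ j, u q k j * u q l j = if k = l then 1 else 0) (k₀ : Fin d) :
    tInner (sumRankOne c u) (fun q => u q k₀) = c k₀ := by
  simp [tInner_sumRankOne, mulVec, dotProduct, hu, zero_pow hm.ne']

theorem stmt1_general (p d : ℕ) (hp : 3 ≤ p) (hd : 0 < d)
    (c : Fin d → ℝ) (hc : ∀ k, 0 ≤ c k)
    (u : Fin (p - 1) → Fin d → Fin d → ℝ)
    (hu : ∀ q k l, (∑ j, u q k j * u q l j) = if k = l then 1 else 0)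
    (A : (Fin (p - 1) → Fin d) → ℝ)
    (hA : ∀ i, A i = ∑ k, c k * ∏ q, u q k (i q)) :
    specNorm A = Finset.univ.sup' ⟨⟨0, hd⟩, Finset.mem_univ _⟩ c := by
  obtain rfl : A = sumRankOne c u := funext hA
  obtain ⟨k₀, -, hk₀⟩ := exists_mem_eq_sup' ⟨⟨0, hd⟩, mem_univ _⟩ c
  rw [hk₀]
  refine IsGreatest.csSup_eq ⟨⟨fun q => u q k₀, fun q => ?_, ?_⟩, ?_⟩
  · simpa [UnitVec, sq] using hu q k₀ k₀
  · exact (tInner_sumRankOne_row (by omega) c hu k₀).symm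
  · rintro _ ⟨x, hx, rfl⟩
    rw [tInner_sumRankOne]
    refine sum_mul_prod_le (by omega) hc (fun k => hk₀ ▸ le_sup' c (mem_univ k)) fun q => ?_
    exact (sum_sq_mulVec_of_orthonormal (hu q) (x q)).trans (hx q)

/-- If `c` is a unit vector with nonnegative entries and `u_k^{(q)}`, `q = 2,…,p`, are
orthonormal bases, then the spectral norm of the `(p-1)`-th order tensor
`∑_k c_k u_k^{(2)} ⊗ ⋯ ⊗ u_k^{(p)}` equals `max_k c_k`. -/
theorem stmt1 (p d : ℕ) (hp : 3 ≤ p) (hd : 0 < d)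
    (c : Fin d → ℝ) (hc : ∀ k, 0 ≤ c k) (hcunit : ∑ k, c k ^ 2 = 1)
    (u : Fin (p - 1) → Fin d → Fin d → ℝ)
    (hu : ∀ q k l, (∑ j, u q k j * u q l j) = if k = l then 1 else 0)
    (A : (Fin (p - 1) → Fin d) → ℝ)
    (hA : ∀ i, A i = ∑ k, c k * ∏ q, u q k (i q)) :
    specNorm A = Finset.univ.sup' ⟨⟨0, hd⟩, Finset.mem_univ _⟩ c :=
  stmt1_general p d hp hd c hc u hu A hA
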